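/- Let U, V, Y be measurable random variables on a probability space (Ω, μ), each taking finitely many values in measurable spaces with measurable singletons, and suppose V is independent of the pair ⟨U, Y⟩. Then for every measurable function h on the value space of V, the view obtained by keeping U intact and distorting V by h preserves the mutual information with the label: I(⟨U, h ∘ V⟩ : Y) = I(U : Y). -/
import Mathlib


open MeasureTheory Complex

/-- The Shannon entropy of a (finitely-valued) random variable `X` on a probability space,
`H(X) = −∑_s P(X = s) · log P(X = s)` (as in Mathlib's `ProbabilityTheory.entropy`). -/
noncomputable def entropy {Ω S : Type*} [MeasurableSpace Ω] (μ : Measure Ω) (X : Ω → S) : ℝ :=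
  ∑' s : S, Real.negMulLog (μ (X ⁻¹' {s})).toReal

/-- The conditional entropy `H(X | Y) = H(⟨X, Y⟩) − H(Y)` of finitely-valued random variables. -/
noncomputable def condEntropy {Ω S T : Type*} [MeasurableSpace Ω] (μ : Measure Ω)
    (X : Ω → S) (Y : Ω → T) : ℝ :=
  entropy μ (fun ω => (X ω, Y ω)) - entropy μ Y

/-- The mutual information `I(X : Y) = H(X) − H(X | Y)` of finitely-valued random variables. -/
noncomputable def mutualInfo {Ω S T : Type*} [MeasurableSpace Ω] (μ : Measure Ω)
    (X : Ω → S) (Y : Ω → T) : ℝ :=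
  entropy μ X - condEntropy μ X Y

section Aux

open ProbabilityTheory

variable {Ω S T : Type*} [MeasurableSpace Ω] {μ : MeasureTheory.Measure Ω}

lemma preimage_singleton_eq_empty {X : Ω → S} {s : S} (hs : s ∉ Set.range X) :
    X ⁻¹' {s} = ∅ := by
  ext ω
  simp only [Set.mem_preimage, Set.mem_singleton_iff, Set.mem_empty_iff_false, iff_false]
  exact fun h => hs ⟨ω, h⟩

lemma entropy_eq_sum (X : Ω → S) {A : Finset S} (hA : Set.range X ⊆ A) :
    entropy μ X = ∑ s ∈ A, Real.negMulLog (μ (X ⁻¹' {s})).toReal := by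
  refine tsum_eq_sum ?_
  intro s hs
  rw [preimage_singleton_eq_empty (fun h => hs (hA h))]
  simp [Real.negMulLog_zero]

lemma sum_measure_preimage [MeasurableSpace S] [MeasurableSingletonClass S]
    [MeasureTheory.IsProbabilityMeasure μ]
    {X : Ω → S} (hX : Measurable X) {A : Finset S} (hA : Set.range X ⊆ A) :
    ∑ s ∈ A, (μ (X ⁻¹' {s})).toReal = 1 := by
  classical
  have h1 : ∑ s ∈ A, μ (X ⁻¹' {s}) = 1 := by
    rw [← MeasureTheory.measure_biUnion_finset]
    · have huniv : (⋃ s ∈ A, X ⁻¹' {s}) = Set.univ := by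
        ext ω
        simp only [Set.mem_iUnion, Set.mem_preimage, Set.mem_singleton_iff, Set.mem_univ,
          iff_true]
        exact ⟨X ω, hA (Set.mem_range_self ω), rfl⟩
      rw [huniv, MeasureTheory.measure_univ]
    · intro s _ t _ hst
      exact Set.disjoint_left.2 fun ω h1 h2 => hst (by
        simp only [Set.mem_preimage, Set.mem_singleton_iff] at h1 h2; rw [← h1, ← h2])
    · exact fun s _ => hX (measurableSet_singleton s)
  rw [← ENNReal.toReal_sum (fun s _ => MeasureTheory.measure_ne_top μ _), h1, ENNReal.toReal_one]

/-- Entropy is invariant under relabelling by an equivalence. -/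
lemma entropy_comp_equiv {S' : Type*} (X : Ω → S) (e : S ≃ S') :
    entropy μ (fun ω => e (X ω)) = entropy μ X := by
  unfold entropy
  rw [← e.tsum_eq]
  refine tsum_congr fun s => ?_
  congr 2
  have : (fun ω => e (X ω)) ⁻¹' {e s} = X ⁻¹' {s} := by
    ext ω; simp [e.injective.eq_iff]
  rw [this]

/-- Entropy of an independent pair is the sum of entropies. -/
lemma entropy_pair_of_indep [MeasurableSpace S] [MeasurableSingletonClass S]
    [MeasurableSpace T] [MeasurableSingletonClass T]
    [MeasureTheory.IsProbabilityMeasure μ]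
    {X : Ω → S} {Z : Ω → T} (hX : Measurable X) (hXfin : (Set.range X).Finite)
    (hZ : Measurable Z) (hZfin : (Set.range Z).Finite)
    (hindep : IndepFun X Z μ) :
    entropy μ (fun ω => (X ω, Z ω)) = entropy μ X + entropy μ Z := by
  classical
  set A := hXfin.toFinset with hAdef
  set B := hZfin.toFinset with hBdef
  have hA : Set.range X ⊆ A := by simp [hAdef]
  have hB : Set.range Z ⊆ B := by simp [hBdef]
  have hAB : Set.range (fun ω => (X ω, Z ω)) ⊆ (A ×ˢ B : Finset (S × T)) := by
    rintro p ⟨ω, rfl⟩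
    simp only [Finset.coe_product, Set.mem_prod]
    exact ⟨hA (Set.mem_range_self ω), hB (Set.mem_range_self ω)⟩
  rw [entropy_eq_sum (μ := μ) _ hAB, entropy_eq_sum (μ := μ) X hA,
    entropy_eq_sum (μ := μ) Z hB, Finset.sum_product]
  have key : ∀ a b, ((μ ((fun ω => (X ω, Z ω)) ⁻¹' {(a, b)}))).toReal
      = (μ (X ⁻¹' {a})).toReal * (μ (Z ⁻¹' {b})).toReal := by
    intro a b
    have hpre : (fun ω => (X ω, Z ω)) ⁻¹' {(a, b)} = X ⁻¹' {a} ∩ Z ⁻¹' {b} := by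
      ext ω; simp [Prod.ext_iff]
    rw [hpre, hindep.measure_inter_preimage_eq_mul _ _ (measurableSet_singleton a)
      (measurableSet_singleton b), ENNReal.toReal_mul]
  calc ∑ a ∈ A, ∑ b ∈ B, Real.negMulLog (μ ((fun ω => (X ω, Z ω)) ⁻¹' {(a, b)})).toReal
      = ∑ a ∈ A, ∑ b ∈ B,
        ((μ (Z ⁻¹' {b})).toReal * Real.negMulLog (μ (X ⁻¹' {a})).toReal
          + (μ (X ⁻¹' {a})).toReal * Real.negMulLog (μ (Z ⁻¹' {b})).toReal) := by
        refine Finset.sum_congr rfl fun a _ => Finset.sum_congr rfl fun b _ => ?_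
        rw [key a b, Real.negMulLog_mul]
    _ = ∑ a ∈ A, ((∑ b ∈ B, (μ (Z ⁻¹' {b})).toReal) * Real.negMulLog (μ (X ⁻¹' {a})).toReal
          + (μ (X ⁻¹' {a})).toReal * ∑ b ∈ B, Real.negMulLog (μ (Z ⁻¹' {b})).toReal) := by
        refine Finset.sum_congr rfl fun a _ => ?_
        rw [Finset.sum_add_distrib, ← Finset.sum_mul, ← Finset.mul_sum]
    _ = ∑ a ∈ A, Real.negMulLog (μ (X ⁻¹' {a})).toReal
        + ∑ b ∈ B, Real.negMulLog (μ (Z ⁻¹' {b})).toReal := by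
        simp only [sum_measure_preimage hZ hB, one_mul]
        rw [Finset.sum_add_distrib, ← Finset.sum_mul, sum_measure_preimage hX hA, one_mul]

end Aux

open ProbabilityTheory in
/-- If `V` is independent of the pair `⟨U, Y⟩`, then for every measurable function `h` on the
value space of `V`, the view obtained by keeping `U` intact and distorting `V` by `h` preserves
the mutual information with the label: `I(⟨U, h ∘ V⟩ : Y) = I(U : Y)`. -/
theorem mutualInfo_pair_distort_eq {Ω S T T' G : Type*} [MeasurableSpace Ω]
    [MeasurableSpace S] [MeasurableSingletonClass S]
    [MeasurableSpace T] [MeasurableSingletonClass T]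
    [MeasurableSpace T'] [MeasurableSingletonClass T']
    [MeasurableSpace G] [MeasurableSingletonClass G]
    (μ : Measure Ω) [IsProbabilityMeasure μ]
    (U : Ω → S) (V : Ω → T) (Y : Ω → G)
    (hU : Measurable U) (hUfin : (Set.range U).Finite)
    (hV : Measurable V) (hVfin : (Set.range V).Finite)
    (hY : Measurable Y) (hYfin : (Set.range Y).Finite)
    (hindep : IndepFun V (fun ω => (U ω, Y ω)) μ) :
    ∀ h : T → T', Measurable h →
      mutualInfo μ (fun ω => (U ω, h (V ω))) Y = mutualInfo μ U Y := by
  intro h hh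
  set W : Ω → T' := fun ω => h (V ω) with hWdef
  have hW : Measurable W := hh.comp hV
  have hWfin : (Set.range W).Finite := by
    have : Set.range W ⊆ h '' Set.range V := by rintro _ ⟨ω, rfl⟩; exact ⟨V ω, ⟨ω, rfl⟩, rfl⟩
    exact (hVfin.image h).subset this
  have hUY : Measurable (fun ω => (U ω, Y ω)) := hU.prodMk hY
  have hUYfin : (Set.range fun ω => (U ω, Y ω)).Finite := by
    have : (Set.range fun ω => (U ω, Y ω)) ⊆ Set.range U ×ˢ Set.range Y := by
      rintro _ ⟨ω, rfl⟩; exact ⟨⟨ω, rfl⟩, ⟨ω, rfl⟩⟩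
    exact (hUfin.prod hYfin).subset this
  have hWUY : IndepFun W (fun ω => (U ω, Y ω)) μ := hindep.comp hh measurable_id
  have hWU : IndepFun W U μ := hindep.comp hh measurable_fst
  have h1 : entropy μ (fun ω => ((U ω, W ω), Y ω))
      = entropy μ W + entropy μ (fun ω => (U ω, Y ω)) := by
    rw [← entropy_pair_of_indep hW hWfin hUY hUYfin hWUY]
    exact (entropy_comp_equiv (μ := μ) (fun ω => ((U ω, W ω), Y ω))
      ⟨fun p => (p.1.2, (p.1.1, p.2)), fun p => ((p.2.1, p.1), p.2.2),
        fun p => rfl, fun p => rfl⟩).symm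
  have h2 : entropy μ (fun ω => (U ω, W ω)) = entropy μ W + entropy μ U := by
    rw [← entropy_pair_of_indep hW hWfin hU hUfin hWU]
    exact entropy_comp_equiv (μ := μ) (fun ω => (W ω, U ω)) (Equiv.prodComm T' S)
  simp only [mutualInfo, condEntropy]
  rw [h1, h2]
  ring
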